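/- arXiv:1205.2841 — 3 statements merged into one kernel-verified Lean document; each statement's English description precedes it below -/
import Mathlib

section
/- Let A = (Q, Σ, Q_f, Δ) be a hedge automaton and i ≥ 1. A macrostate P belongs to Post^i(∅) if and only if there exists a tree t ∈ T(Σ) of height at most i such that P = {q ∈ Q | t →A q}. -/
/-- Unranked trees over alphabet `σ`: a root label and a list of subtrees. -/
inductive UTree (σ : Type) : Type where
  | node : σ → List (UTree σ) → UTree σ

namespace UTree

/-- Linearization of an unranked tree, over `σ ⊕ σ` where `Sum.inl a` is the
opening tag `a` and `Sum.inr a` is the closing tag `ā`. -/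
def lin {σ : Type} : UTree σ → List (σ ⊕ σ)
  | .node a ts => Sum.inl a :: ((ts.attach.map fun x => lin x.1).flatten ++ [Sum.inr a])
decreasing_by simp only [UTree.node.sizeOf_spec]; have := List.sizeOf_lt_of_mem x.2; omega

/-- Height of a tree (number of nodes on the longest branch). -/
def height {σ : Type} : UTree σ → ℕ
  | .node _ ts => ((ts.attach.map fun x => height x.1).foldr max 0) + 1
decreasing_by simp only [UTree.node.sizeOf_spec]; have := List.sizeOf_lt_of_mem x.2; omega

end UTree

/-- Linearization of a hedge (a finite sequence of trees). -/
def linH {σ : Type} (h : List (UTree σ)) : List (σ ⊕ σ) := (h.map UTree.lin).flatten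

/-- `u` is a nonempty proper prefix of the linearization of some tree. -/
def ProperPrefix {σ : Type} (u : List (σ ⊕ σ)) : Prop :=
  ∃ (t : UTree σ) (v : List (σ ⊕ σ)), v ≠ [] ∧ u ++ v = t.lin

/-- A hedge automaton: final states and rules `(a, L, q)` with a horizontal
language `L ⊆ Q*`. -/
structure HedgeAutomaton (σ Q : Type) where
  final : Set Q
  rules : Set (σ × Set (List Q) × Q)

/-- `HEval A t q` holds iff some run of `A` on `t` labels the root of `t` by `q`. -/
inductive HEval {σ Q : Type} (A : HedgeAutomaton σ Q) : UTree σ → Q → Prop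
  | node {a : σ} {ts : List (UTree σ)} {q : Q} {L : Set (List Q)} {qs : List Q} :
      (a, L, q) ∈ A.rules → qs ∈ L → qs.length = ts.length →
      (∀ p ∈ ts.zip qs, HEval A p.1 p.2) → HEval A (UTree.node a ts) q

/-- A tree is accepted if some run labels its root by a final state. -/
def accepted {σ Q : Type} (A : HedgeAutomaton σ Q) (t : UTree σ) : Prop :=
  ∃ q ∈ A.final, HEval A t q

/-- All horizontal languages of `A` are regular. -/
def RegularHA {σ Q : Type} (A : HedgeAutomaton σ Q) : Prop :=
  ∀ r ∈ A.rules, Language.IsRegular (r.2.1 : Language Q)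

/-- The words `p₁⋯pₙ` of a macrostate word `P₁⋯Pₙ`, with `pᵢ ∈ Pᵢ` for all `i`. -/
def wordsOf {Q : Type} (π : List (Set Q)) : Set (List Q) :=
  {w | List.Forall₂ (· ∈ ·) w π}

/-- `Post_a(π)` for a macrostate word `π`. -/
def postA {σ Q : Type} (A : HedgeAutomaton σ Q) (a : σ) (π : List (Set Q)) : Set Q :=
  {q | ∃ L : Set (List Q), (a, L, q) ∈ A.rules ∧ (L ∩ wordsOf π).Nonempty}

/-- The macrostate `P_t = {q | t →A q}` of a tree `t`. -/
def Pt {σ Q : Type} (A : HedgeAutomaton σ Q) (t : UTree σ) : Set Q := {q | HEval A t q}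

/-- The macrostate word `π_h = P_{t₁}⋯P_{tₙ}` of a hedge `h = t₁⋯tₙ`. -/
def pih {σ Q : Type} (A : HedgeAutomaton σ Q) (h : List (UTree σ)) : List (Set Q) :=
  h.map (Pt A)

/-- `Post(M) = {Post_a(π) | a ∈ Σ, π ∈ M*} ∪ M`. -/
def postSet {σ Q : Type} (A : HedgeAutomaton σ Q) (M : Set (Set Q)) : Set (Set Q) :=
  {P | ∃ (a : σ) (π : List (Set Q)), (∀ x ∈ π, x ∈ M) ∧ P = postA A a π} ∪ M

/-- `Post^i(M)`: the `i`-fold iteration of `Post`, with `Post^0(M) = M`. -/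
def postIter {σ Q : Type} (A : HedgeAutomaton σ Q) : ℕ → Set (Set Q) → Set (Set Q)
  | 0, M => M
  | n + 1, M => postSet A (postIter A n M)

/-! The macrostate of a tree `a(t₁⋯tₙ)` is `Post_a` of the macrostate word `P_{t₁}⋯P_{tₙ}` of its
children. Hence, by induction on `n`, `Post^n(∅)` is exactly the set of macrostates of trees of
height at most `n` (for `n = 0` both are empty, as every tree has height at least one). -/

namespace UTree

variable {σ : Type}

lemma height_node (a : σ) (ts : List (UTree σ)) :
    (node a ts).height = (ts.map height).foldr max 0 + 1 := by
  rw [height, List.attach_map_val]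

lemma height_pos (t : UTree σ) : 0 < t.height := by
  cases t
  simp [height_node]

lemma height_node_le_succ_iff {a : σ} {ts : List (UTree σ)} {n : ℕ} :
    (node a ts).height ≤ n + 1 ↔ ∀ t ∈ ts, t.height ≤ n := by
  rw [height_node, Nat.add_le_add_iff_right]
  constructor
  · exact fun h t ht => (List.le_max_of_le (List.mem_map_of_mem ht) le_rfl).trans h
  · exact fun h => List.max_le_of_forall_le _ _ (List.forall_mem_map.2 h)

end UTree

lemma List.exists_map_eq_of_forall_mem_image {α β : Type*} {f : α → β} {s : Set α}
    {l : List β} (h : ∀ x ∈ l, x ∈ f '' s) : ∃ l' : List α, (∀ a ∈ l', a ∈ s) ∧ l'.map f = l := by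
  rw [Set.image_eq_range] at h
  obtain ⟨l', rfl⟩ : l ∈ Set.range (List.map fun x : s => f x) := by
    rwa [Set.range_list_map]
  exact ⟨l'.map Subtype.val, List.forall_mem_map.2 fun x _ => x.2, by simp⟩

section

variable {σ Q : Type} (A : HedgeAutomaton σ Q)

lemma HEval.node_iff {a : σ} {ts : List (UTree σ)} {q : Q} :
    HEval A (.node a ts) q ↔
      ∃ L qs, (a, L, q) ∈ A.rules ∧ qs ∈ L ∧ List.Forall₂ (fun t q => HEval A t q) ts qs := by
  simp only [List.forall₂_iff_zip]
  constructor
  · rintro ⟨hrule, hL, hlen, hz⟩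
    exact ⟨_, _, hrule, hL, hlen.symm, fun h => hz _ h⟩
  · rintro ⟨L, qs, hrule, hL, hlen, hz⟩
    exact .node hrule hL hlen.symm fun _ h => hz h

lemma Pt_node (a : σ) (ts : List (UTree σ)) :
    Pt A (.node a ts) = postA A a (pih A ts) := by
  ext q
  simp only [Pt, postA, pih, wordsOf, Set.mem_ofPred_eq, HEval.node_iff, Set.Nonempty,
    Set.mem_inter_iff, List.forall₂_map_right_iff]
  exact exists_congr fun L => ⟨fun ⟨qs, hr, hL, h⟩ => ⟨hr, qs, hL, h.flip⟩,
    fun ⟨hr, qs, hL, h⟩ => ⟨qs, hr, hL, h.flip⟩⟩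

lemma postIter_empty_eq (n : ℕ) : postIter A n ∅ = Pt A '' {t | t.height ≤ n} := by
  induction n with
  | zero => simp [postIter, fun t : UTree σ => (UTree.height_pos t).ne']
  | succ n ih =>
    ext P
    rw [postIter, postSet, ih]
    constructor
    · rintro (⟨a, π, hπ, rfl⟩ | ⟨t, ht, rfl⟩)
      · obtain ⟨ts, hts, rfl⟩ := List.exists_map_eq_of_forall_mem_image hπ
        exact ⟨.node a ts, UTree.height_node_le_succ_iff.2 hts, Pt_node A a ts⟩
      · exact ⟨t, Nat.le_succ_of_le ht, rfl⟩
    · rintro ⟨⟨a, ts⟩, ht, rfl⟩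
      refine Or.inl ⟨a, pih A ts, ?_, Pt_node A a ts⟩
      exact List.forall_mem_map.2 fun t ht' => ⟨t, UTree.height_node_le_succ_iff.1 ht t ht', rfl⟩

end

theorem mem_postIter_iff_general {σ Q : Type} (A : HedgeAutomaton σ Q) (i : ℕ) (P : Set Q) :
    P ∈ postIter A i ∅ ↔ ∃ t : UTree σ, t.height ≤ i ∧ P = Pt A t := by
  simp only [postIter_empty_eq, Set.mem_image, Set.mem_ofPred_eq, eq_comm]

/-- Lemma 2: for `i ≥ 1`, a macrostate `P` belongs to `Post^i(∅)`
iff there is a tree `t` of height at most `i` with `P = {q | t →A q}`. -/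
theorem mem_postIter_iff {σ Q : Type} [Fintype σ] [Fintype Q]
    (A : HedgeAutomaton σ Q) (hfin : A.rules.Finite) (hreg : RegularHA A)
    (i : ℕ) (hi : 1 ≤ i) (P : Set Q) :
    P ∈ postIter A i ∅ ↔ ∃ t : UTree σ, t.height ≤ i ∧ P = Pt A t :=
  mem_postIter_iff_general A i P
end

section
/- Let A = (Q, Σ, Q_f, Δ) be a hedge automaton and wa a nonempty proper prefix of the linearization of some tree, with a ∈ Σ and w = w'a'[h'] for some a' ∈ Σ and hedge h'. Then A is wa-universal if and only if X_wa = ∅; moreover X_wa = {π_h ∈ E* | there exists a word v such that wa[h]āv is the linearization of a tree over Σ not accepted by A}. -/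
/-- `A` is `u`-universal: every tree whose linearization starts with `u` is accepted. -/
def uUniversal {σ Q : Type} (A : HedgeAutomaton σ Q) (u : List (σ ⊕ σ)) : Prop :=
  ∀ t : UTree σ, u <+: t.lin → accepted A t

/-- `E* = {π_h | h ∈ H(Σ)}`. -/
def Estar {σ Q : Type} (A : HedgeAutomaton σ Q) : Set (List (Set Q)) :=
  Set.range (pih A)

/-- `Pref(X) = {π ∈ E* | ∃ π' ∈ E* : ππ' ∈ X}`. -/
def PrefX {σ Q : Type} (A : HedgeAutomaton σ Q) (X : Set (List (Set Q))) :
    Set (List (Set Q)) :=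
  {π ∈ Estar A | ∃ π' ∈ Estar A, π ++ π' ∈ X}

/-- `XRel A w a X` holds iff `X = X_{wa}`: `X_a = {π ∈ E* | Post_a(π) ∩ Q_f = ∅}` and,
for `w = w'a'[h']`, `X_{wa} = {π ∈ E* | π_{h'}·Post_a(π) ∈ Pref(X_{w'a'})}`. -/
inductive XRel {σ Q : Type} (A : HedgeAutomaton σ Q) :
    List (σ ⊕ σ) → σ → Set (List (Set Q)) → Prop
  | base (a : σ) : XRel A [] a {π ∈ Estar A | postA A a π ∩ A.final = ∅}
  | step {w' : List (σ ⊕ σ)} {a' : σ} {X' : Set (List (Set Q))}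
      (a : σ) (h' : List (UTree σ)) :
      XRel A w' a' X' →
      XRel A (w' ++ Sum.inl a' :: linH h') a
        {π ∈ Estar A | pih A h' ++ [postA A a π] ∈ PrefX A X'}

/-!
For every hedge `h`, `π_h ∈ X_{wa}` holds iff `w a [h] ā` extends to the linearization of a tree
rejected by `A`; this is proved along the recursive definition of `X_{wa}`, and it is essential to
state it for every representative `h` of `π_h`. The base case is `Post_a(π_h) = P_{a(h)}`. In the
step, linearizations parse uniquely, so a tree whose linearization starts with `w' a' [h'] a [h] ā`
is one whose linearization is `w' a' [h' a(h) h''] ā' v` for some hedge `h''` and word `v`; this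
matches `π_{h'} Post_a(π_h) π_{h''} ∈ X_{w'a'}`.
-/

section Linearization

variable {σ : Type}

theorem UTree.lin_node (a : σ) (ts : List (UTree σ)) :
    (node a ts).lin = Sum.inl a :: (linH ts ++ [Sum.inr a]) := by
  rw [lin]
  simp [linH]

@[simp]
theorem linH_nil : linH ([] : List (UTree σ)) = [] := rfl

@[simp]
theorem linH_cons (t : UTree σ) (h : List (UTree σ)) :
    linH (t :: h) = t.lin ++ linH h := by
  simp [linH]

@[simp]
theorem linH_append (h₁ h₂ : List (UTree σ)) :
    linH (h₁ ++ h₂) = linH h₁ ++ linH h₂ := by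
  simp [linH]

theorem UTree.lin_ne_append_inl (t : UTree σ) (u : List (σ ⊕ σ)) (a : σ) :
    t.lin ≠ u ++ [Sum.inl a] := by
  obtain ⟨b, ts⟩ := t
  intro h
  simpa [UTree.lin_node] using congrArg List.reverse h

theorem exists_append_of_linH_append_eq :
    ∀ {g ts : List (UTree σ)} {z rest : List (σ ⊕ σ)} {c : σ},
      linH g ++ z = linH ts ++ Sum.inr c :: rest →
      ∃ k, ts = g ++ k ∧ z = linH k ++ Sum.inr c :: rest
  | [], ts, _, _, _, h => ⟨ts, rfl, h⟩
  | .node d ds :: _, [], _, _, _, h => by simp [UTree.lin_node] at h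
  | .node d ds :: gs, .node e es :: ss, z, rest, c, h => by
    simp only [linH_cons, UTree.lin_node, List.cons_append, List.append_assoc,
      List.cons.injEq, Sum.inl.injEq] at h
    obtain ⟨rfl, h⟩ := h
    obtain ⟨k, rfl, hk⟩ := exists_append_of_linH_append_eq (g := ds) h
    obtain rfl : k = [] := by
      obtain _ | ⟨⟨f, fs⟩, k⟩ := k
      · rfl
      · simp [UTree.lin_node] at hk
    simp only [linH_nil, List.nil_append, List.cons.injEq, true_and] at hk
    obtain ⟨k', rfl, hk'⟩ := exists_append_of_linH_append_eq hk
    exact ⟨k', by simp, hk'⟩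

theorem UTree.eq_of_lin_append_eq {t s : UTree σ} {x y : List (σ ⊕ σ)}
    (h : t.lin ++ x = s.lin ++ y) : t = s ∧ x = y := by
  obtain ⟨b, ts⟩ := t
  obtain ⟨c, ss⟩ := s
  simp only [lin_node, List.cons_append, List.append_assoc, List.cons.injEq,
    Sum.inl.injEq] at h
  obtain ⟨rfl, h⟩ := h
  obtain ⟨k, rfl, hk⟩ := exists_append_of_linH_append_eq h
  obtain _ | ⟨⟨d, ds⟩, k⟩ := k
  · simpa using hk
  · simp [lin_node] at hk

theorem exists_linH_eq_of_prefix :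
    ∀ {h : List (UTree σ)} {u : List (σ ⊕ σ)} {a : σ}, u ++ [Sum.inl a] <+: linH h →
      ∃ ts rest, linH h = u ++ [Sum.inl a] ++ linH ts ++ [Sum.inr a] ++ rest
  | [], u, a, hu => by simpa using hu.length_le
  | .node b cs :: h, u, a, hu => by
    rw [linH_cons] at hu ⊢
    rcases List.prefix_or_prefix_of_prefix hu (List.prefix_append _ (linH h)) with hc | hc
    · suffices ∃ ts rest,
          (UTree.node b cs).lin = u ++ [Sum.inl a] ++ linH ts ++ [Sum.inr a] ++ rest by
        obtain ⟨ts, rest, hts⟩ := this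
        exact ⟨ts, rest ++ linH h, by simp [hts]⟩
      rw [UTree.lin_node] at hc
      obtain _ | ⟨e, u⟩ := u
      · simp only [List.nil_append, List.singleton_prefix_cons_iff, Sum.inl.injEq] at hc
        exact ⟨cs, [], by simp [hc, UTree.lin_node]⟩
      · rw [List.cons_append, List.cons_prefix_cons, List.prefix_concat_iff] at hc
        obtain ⟨rfl, hc | hc⟩ := hc
        · simp at hc
        · obtain ⟨ts, rest, hts⟩ := exists_linH_eq_of_prefix hc
          exact ⟨ts, rest ++ [Sum.inr b], by simp [UTree.lin_node, hts]⟩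
    · rcases List.prefix_concat_iff.mp hc with hc | ⟨u', rfl⟩
      · exact absurd hc (UTree.lin_ne_append_inl _ u a)
      · rw [List.append_assoc, List.prefix_append_right_inj] at hu
        obtain ⟨ts, rest, hts⟩ := exists_linH_eq_of_prefix hu
        exact ⟨ts, rest, by simp [hts]⟩

theorem UTree.exists_lin_eq_of_prefix {t : UTree σ} {u : List (σ ⊕ σ)} {a : σ}
    (hu : u ++ [Sum.inl a] <+: t.lin) :
    ∃ ts rest, t.lin = u ++ [Sum.inl a] ++ linH ts ++ [Sum.inr a] ++ rest := by
  simpa using exists_linH_eq_of_prefix (h := [t]) (by simpa using hu)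

theorem UTree.exists_lin_eq_of_prefix_linH {t : UTree σ} {u : List (σ ⊕ σ)} {b : σ}
    {g : List (UTree σ)} (hg : u ++ [Sum.inl b] ++ linH g <+: t.lin) :
    ∃ k rest, t.lin = u ++ [Sum.inl b] ++ linH (g ++ k) ++ [Sum.inr b] ++ rest := by
  obtain ⟨ts, rest, hts⟩ := t.exists_lin_eq_of_prefix ((List.prefix_append _ _).trans hg)
  obtain ⟨z, hz⟩ := hg
  rw [hts] at hz
  simp only [List.append_assoc, List.append_cancel_left_eq, List.cons_append,
    List.cons.injEq, true_and] at hz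
  obtain ⟨k, rfl, -⟩ := exists_append_of_linH_append_eq hz
  exact ⟨k, rest, hts⟩

end Linearization

section Automaton

variable {σ Q : Type} {A : HedgeAutomaton σ Q}

theorem mem_wordsOf_pih {qs : List Q} {h : List (UTree σ)} :
    qs ∈ wordsOf (pih A h) ↔ qs.length = h.length ∧ ∀ p ∈ h.zip qs, HEval A p.1 p.2 := by
  rw [wordsOf, pih, Set.mem_ofPred_eq, List.forall₂_map_right_iff,
    ← show List.Forall₂ (flip _) h qs ↔ _ from ⟨List.Forall₂.flip, List.Forall₂.flip⟩,
    List.forall₂_iff_zip]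
  simp [flip, Pt, eq_comm]

theorem postA_pih (a : σ) (h : List (UTree σ)) : postA A a (pih A h) = Pt A (.node a h) := by
  ext q
  constructor
  · rintro ⟨L, hL, qs, hqs, hw⟩
    exact HEval.node hL hqs (mem_wordsOf_pih.mp hw).1 (mem_wordsOf_pih.mp hw).2
  · rintro (⟨hL, hqs, hlen, hrun⟩)
    exact ⟨_, hL, _, hqs, mem_wordsOf_pih.mpr ⟨hlen, hrun⟩⟩

end Automaton

section Rejection

variable {σ Q : Type}

def HasRejectedCompletion (A : HedgeAutomaton σ Q) (w : List (σ ⊕ σ)) (a : σ)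
    (h : List (UTree σ)) : Prop :=
  ∃ (v : List (σ ⊕ σ)) (t : UTree σ),
    t.lin = w ++ [Sum.inl a] ++ linH h ++ [Sum.inr a] ++ v ∧ ¬ accepted A t

variable {A : HedgeAutomaton σ Q}

theorem hasRejectedCompletion_nil_iff (a : σ) (h : List (UTree σ)) :
    HasRejectedCompletion A [] a h ↔ ¬ accepted A (.node a h) := by
  constructor
  · rintro ⟨v, t, ht, hrej⟩
    obtain ⟨rfl, -⟩ := UTree.eq_of_lin_append_eq (x := []) (s := .node a h) (y := v)
      (by simpa [UTree.lin_node] using ht)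
    exact hrej
  · exact fun hrej => ⟨[], _, by simp [UTree.lin_node], hrej⟩

theorem hasRejectedCompletion_append_iff (w' : List (σ ⊕ σ)) (a' a : σ)
    (h' h : List (UTree σ)) :
    HasRejectedCompletion A (w' ++ Sum.inl a' :: linH h') a h ↔
      ∃ h'', HasRejectedCompletion A w' a' (h' ++ .node a h :: h'') := by
  have hlin : ∀ v, w' ++ Sum.inl a' :: linH h' ++ [Sum.inl a] ++ linH h ++ [Sum.inr a] ++ v =
      w' ++ [Sum.inl a'] ++ linH (h' ++ [.node a h]) ++ v := by
    simp [UTree.lin_node]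
  constructor
  · rintro ⟨v, t, ht, hrej⟩
    rw [hlin] at ht
    obtain ⟨k, rest, hk⟩ := UTree.exists_lin_eq_of_prefix_linH ⟨v, ht.symm⟩
    exact ⟨k, rest, t, by simpa using hk, hrej⟩
  · rintro ⟨h'', v, t, ht, hrej⟩
    exact ⟨linH h'' ++ Sum.inr a' :: v, t, by simp [ht, UTree.lin_node], hrej⟩

theorem uUniversal_append_inl_iff (w : List (σ ⊕ σ)) (a : σ) :
    uUniversal A (w ++ [Sum.inl a]) ↔ ∀ h, ¬ HasRejectedCompletion A w a h := by
  constructor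
  · rintro huniv h ⟨v, t, ht, hrej⟩
    exact hrej (huniv t ⟨linH h ++ [Sum.inr a] ++ v, by simp [ht]⟩)
  · intro hacc t hpre
    by_contra hrej
    obtain ⟨h, v, ht⟩ := t.exists_lin_eq_of_prefix hpre
    exact hacc h ⟨v, t, ht, hrej⟩

end Rejection

section XRel

variable {σ Q : Type} {A : HedgeAutomaton σ Q}

theorem mem_PrefX_pih_iff {X : Set (List (Set Q))} {g : List (UTree σ)} :
    pih A g ∈ PrefX A X ↔ ∃ k, pih A (g ++ k) ∈ X := by
  simp [PrefX, Estar, pih]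

theorem XRel.subset_Estar {w : List (σ ⊕ σ)} {a : σ} {X : Set (List (Set Q))}
    (hX : XRel A w a X) : X ⊆ Estar A := by
  cases hX <;> exact fun _ hπ => hπ.1

theorem XRel.pih_mem_iff {w : List (σ ⊕ σ)} {a : σ} {X : Set (List (Set Q))}
    (hX : XRel A w a X) (h : List (UTree σ)) :
    pih A h ∈ X ↔ HasRejectedCompletion A w a h := by
  induction hX generalizing h with
  | base a =>
    rw [hasRejectedCompletion_nil_iff, accepted]
    simp [Estar, postA_pih, Set.eq_empty_iff_forall_notMem, Pt, imp_not_comm]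
  | step a h' hX' ih =>
    rw [hasRejectedCompletion_append_iff]
    have : pih A h' ++ [Pt A (.node a h)] = pih A (h' ++ [.node a h]) := by simp [pih]
    simp [Estar, postA_pih, this, mem_PrefX_pih_iff, ih]

end XRel

theorem wa_universal_iff_Xwa_general {σ Q : Type}
    (A : HedgeAutomaton σ Q)
    (w : List (σ ⊕ σ)) (a : σ) (X : Set (List (Set Q)))
    (hX : XRel A w a X) :
    (uUniversal A (w ++ [Sum.inl a]) ↔ X = ∅) ∧
    X = {π | ∃ h : List (UTree σ), π = pih A h ∧
          ∃ (v : List (σ ⊕ σ)) (t : UTree σ),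
            t.lin = w ++ [Sum.inl a] ++ linH h ++ [Sum.inr a] ++ v ∧
            ¬ accepted A t} := by
  have hXeq : X = {π | ∃ h, π = pih A h ∧ HasRejectedCompletion A w a h} := by
    ext π
    refine ⟨fun hπ => ?_, fun ⟨h, hπ, hrej⟩ => hπ ▸ (hX.pih_mem_iff h).mpr hrej⟩
    obtain ⟨h, rfl⟩ := hX.subset_Estar hπ
    exact ⟨h, rfl, (hX.pih_mem_iff h).mp hπ⟩
  refine ⟨?_, hXeq⟩
  rw [uUniversal_append_inl_iff, hXeq, Set.eq_empty_iff_forall_notMem]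
  simp [forall_comm (α := List (Set Q))]

/-- Proposition 4: for `wa` a nonempty proper prefix of some
linearization, with `w = w'a'[h']` nonempty, `A` is `wa`-universal iff `X_{wa} = ∅`;
moreover `X_{wa}` is exactly the set of `π_h ∈ E*` such that `wa[h]āv` is the
linearization of some tree not accepted by `A`, for some word `v`. -/
theorem wa_universal_iff_Xwa {σ Q : Type} [Fintype σ] [Fintype Q]
    (A : HedgeAutomaton σ Q) (hfin : A.rules.Finite) (hreg : RegularHA A)
    (w : List (σ ⊕ σ)) (a : σ) (X : Set (List (Set Q)))
    (hw : w ≠ []) (hX : XRel A w a X)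
    (hpre : ProperPrefix (w ++ [Sum.inl a])) :
    (uUniversal A (w ++ [Sum.inl a]) ↔ X = ∅) ∧
    X = {π | ∃ h : List (UTree σ), π = pih A h ∧
          ∃ (v : List (σ ⊕ σ)) (t : UTree σ),
            t.lin = w ++ [Sum.inl a] ++ linH h ++ [Sum.inr a] ++ v ∧
            ¬ accepted A t} :=
  wa_universal_iff_Xwa_general A w a X hX
end

section
/- Let A = (Q, Σ, Q_f, Δ) be a hedge automaton and let wa be a nonempty proper prefix of the linearization of some tree, with a ∈ Σ. Then Y_wa is ⊆-downward closed within rel(E*): for all r ∈ Y_wa and r' ∈ rel(E*) with r' ⊆ r, we have r' ∈ Y_wa. -/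
/-- A hedge automaton whose horizontal languages are given by NFAs: `step` is the
transition relation of the disjoint union `B` of the fixed NFAs `B_L` (with overall
state set `S`), and each rule `(a, I, F, q)` records the initial states `I = I_L`
and final states `F = F_L` of the NFA recognizing its horizontal language in `B`. -/
structure HedgeAutNFA (σ Q S : Type) where
  final : Set Q
  step : S → Q → Set S
  rules : Set (σ × Set S × Set S × Q)

/-- Paths in the NFA `B` given by `step`. -/
def nfaPath {Q S : Type} (step : S → Q → Set S) : S → List Q → S → Prop
  | s, [], s' => s = s'
  | s, q :: w, s'' => ∃ s', s' ∈ step s q ∧ nfaPath step s' w s''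

/-- The horizontal language recognized between initial states `I` and final states `F`. -/
def nfaLang {Q S : Type} (step : S → Q → Set S) (I F : Set S) : Set (List Q) :=
  {w | ∃ s ∈ I, ∃ s' ∈ F, nfaPath step s w s'}

/-- `rel(π)`: the pairs `(s, s')` connected in `B` by a path labeled by some word of
`words(π)`. -/
def relw {Q S : Type} (step : S → Q → Set S) (π : List (Set Q)) : Set (S × S) :=
  {p | ∃ w ∈ wordsOf π, nfaPath step p.1 w p.2}

/-- Composition of relations in diagrammatic order. -/
def relComp {S : Type} (r₁ r₂ : Set (S × S)) : Set (S × S) :=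
  {p | ∃ s', (p.1, s') ∈ r₁ ∧ (s', p.2) ∈ r₂}

/-- The identity relation on `S`. -/
def relId {S : Type} : Set (S × S) := {p | p.1 = p.2}

/-- `R*`: all compositions `r₁ ∘ ⋯ ∘ rₙ` (`n ≥ 0`) of relations of `R`; contains the
identity relation (case `n = 0`). -/
def starRel {S : Type} (R : Set (Set (S × S))) : Set (Set (S × S)) :=
  {r | ∃ l : List (Set (S × S)), (∀ x ∈ l, x ∈ R) ∧ r = l.foldr relComp relId}

/-- `Post_a(π)` for a macrostate word `π`. -/
def postAw {σ Q S : Type} (A : HedgeAutNFA σ Q S) (a : σ) (π : List (Set Q)) : Set Q :=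
  {q | ∃ I F, (a, I, F, q) ∈ A.rules ∧ (nfaLang A.step I F ∩ wordsOf π).Nonempty}

/-- `Post_a(r)` for a relation `r ⊆ S × S`. -/
def postRel {σ Q S : Type} (A : HedgeAutNFA σ Q S) (a : σ) (r : Set (S × S)) : Set Q :=
  {q | ∃ I F, (a, I, F, q) ∈ A.rules ∧ ∃ p ∈ r, p.1 ∈ I ∧ p.2 ∈ F}

/-- `HEvalN A t q` holds iff some run of `A` on `t` labels the root of `t` by `q`
(the horizontal language of a rule `(a, I, F, q)` is `nfaLang A.step I F`). -/
inductive HEvalN {σ Q S : Type} (A : HedgeAutNFA σ Q S) : UTree σ → Q → Prop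
  | node {a : σ} {ts : List (UTree σ)} {q : Q} {I F : Set S} {qs : List Q} :
      (a, I, F, q) ∈ A.rules → qs ∈ nfaLang A.step I F → qs.length = ts.length →
      (∀ p ∈ ts.zip qs, HEvalN A p.1 p.2) → HEvalN A (UTree.node a ts) q

/-- The macrostate `P_t = {q | t →A q}` of a tree `t`. -/
def PtN {σ Q S : Type} (A : HedgeAutNFA σ Q S) (t : UTree σ) : Set Q := {q | HEvalN A t q}

/-- The macrostate word `π_h = P_{t₁}⋯P_{tₙ}` of a hedge `h = t₁⋯tₙ`. -/
def pihN {σ Q S : Type} (A : HedgeAutNFA σ Q S) (h : List (UTree σ)) : List (Set Q) :=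
  h.map (PtN A)

/-- `rel(E*) = {rel(π_h) | h ∈ H(Σ)}`. -/
def relEstar {σ Q S : Type} (A : HedgeAutNFA σ Q S) : Set (Set (S × S)) :=
  relw A.step '' Set.range (pihN A)

/-- `Pref(Y) = {r ∈ rel(E*) | ∃ r' ∈ rel(E*) : r ∘ r' ∈ Y}`. -/
def PrefY {σ Q S : Type} (A : HedgeAutNFA σ Q S) (Y : Set (Set (S × S))) :
    Set (Set (S × S)) :=
  {r ∈ relEstar A | ∃ r' ∈ relEstar A, relComp r r' ∈ Y}

/-- `YRel A w a Y` holds iff `Y = Y_{wa}`: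
`Y_a = {r ∈ rel(E*) | Post_a(r) ∩ Q_f = ∅}` and, for `w = w'a'[h']`,
`Y_{wa} = {r ∈ rel(E*) | rel(π_{h'}) ∘ rel(Post_a(r)) ∈ Pref(Y_{w'a'})}`. -/
inductive YRel {σ Q S : Type} (A : HedgeAutNFA σ Q S) :
    List (σ ⊕ σ) → σ → Set (Set (S × S)) → Prop
  | base (a : σ) : YRel A [] a {r ∈ relEstar A | postRel A a r ∩ A.final = ∅}
  | step {w' : List (σ ⊕ σ)} {a' : σ} {Y' : Set (Set (S × S))}
      (a : σ) (h' : List (UTree σ)) :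
      YRel A w' a' Y' →
      YRel A (w' ++ Sum.inl a' :: linH h') a
        {r ∈ relEstar A |
          relComp (relw A.step (pihN A h')) (relw A.step [postRel A a r]) ∈ PrefY A Y'}

/-! Downward closure propagates along the recursion defining `Y_{wa}`: `Post_a` and composition
are monotone, and `rel(E*)` is closed under composition and under `r ↦ rel(Post_a(r))`, the
latter because `Post_a(rel(π_h)) = P_{a[h]}`. So `Pref(Y_{w'a'})`, and with it `Y_{wa}`,
inherits downward closure from `Y_{w'a'}`. -/

def IsDownwardClosedIn {α : Type*} [LE α] (R Y : Set α) : Prop :=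
  ∀ r ∈ Y, ∀ r' ∈ R, r' ≤ r → r' ∈ Y

variable {σ Q S : Type}

lemma nfaPath_append (step : S → Q → Set S) (w₁ w₂ : List Q) (s s'' : S) :
    nfaPath step s (w₁ ++ w₂) s'' ↔ ∃ s', nfaPath step s w₁ s' ∧ nfaPath step s' w₂ s'' := by
  induction w₁ generalizing s with
  | nil => simp [nfaPath]
  | cons q w₁ ih =>
    simp only [List.cons_append, nfaPath, ih]
    exact ⟨fun ⟨s₁, hs₁, s', h₁, h₂⟩ => ⟨s', ⟨s₁, hs₁, h₁⟩, h₂⟩,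
      fun ⟨s', ⟨s₁, hs₁, h₁⟩, h₂⟩ => ⟨s₁, hs₁, s', h₁, h₂⟩⟩

lemma relw_append (step : S → Q → Set S) (π₁ π₂ : List (Set Q)) :
    relw step (π₁ ++ π₂) = relComp (relw step π₁) (relw step π₂) := by
  ext ⟨s, s''⟩
  constructor
  · rintro ⟨w, hw, hp⟩
    rw [← List.take_append_drop π₁.length w, nfaPath_append] at hp
    obtain ⟨s', hp₁, hp₂⟩ := hp
    exact ⟨s', ⟨_, List.forall₂_take_append w π₁ π₂ hw, hp₁⟩,
      ⟨_, List.forall₂_drop_append w π₁ π₂ hw, hp₂⟩⟩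
  · rintro ⟨s', ⟨w₁, h₁, hp₁⟩, ⟨w₂, h₂, hp₂⟩⟩
    exact ⟨w₁ ++ w₂, List.rel_append h₁ h₂, (nfaPath_append step w₁ w₂ s s'').mpr ⟨s', hp₁, hp₂⟩⟩

lemma wordsOf_mono {π π' : List (Set Q)} (h : List.Forall₂ (· ⊆ ·) π' π) :
    wordsOf π' ⊆ wordsOf π := by
  intro w hw
  induction hw generalizing π with
  | nil => cases h; exact .nil
  | cons hq _ ih =>
    cases h with
    | cons hP hπ => exact .cons (hP hq) (ih hπ)

lemma relw_mono (step : S → Q → Set S) {π π' : List (Set Q)}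
    (h : List.Forall₂ (· ⊆ ·) π' π) : relw step π' ⊆ relw step π :=
  fun _ ⟨w, hw, hp⟩ => ⟨w, wordsOf_mono h hw, hp⟩

lemma relComp_mono {r₁ r₂ r₁' r₂' : Set (S × S)} (h₁ : r₁' ⊆ r₁) (h₂ : r₂' ⊆ r₂) :
    relComp r₁' r₂' ⊆ relComp r₁ r₂ :=
  fun _ ⟨s', hp₁, hp₂⟩ => ⟨s', h₁ hp₁, h₂ hp₂⟩

lemma postRel_mono (A : HedgeAutNFA σ Q S) (a : σ) {r r' : Set (S × S)} (h : r' ⊆ r) :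
    postRel A a r' ⊆ postRel A a r :=
  fun _ ⟨I, F, hrule, p, hp, hI, hF⟩ => ⟨I, F, hrule, p, h hp, hI, hF⟩

lemma relw_pihN_mem_relEstar (A : HedgeAutNFA σ Q S) (h : List (UTree σ)) :
    relw A.step (pihN A h) ∈ relEstar A :=
  ⟨pihN A h, ⟨h, rfl⟩, rfl⟩

lemma relComp_mem_relEstar (A : HedgeAutNFA σ Q S) {r₁ r₂ : Set (S × S)}
    (h₁ : r₁ ∈ relEstar A) (h₂ : r₂ ∈ relEstar A) : relComp r₁ r₂ ∈ relEstar A := by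
  obtain ⟨_, ⟨h₁, rfl⟩, rfl⟩ := h₁
  obtain ⟨_, ⟨h₂, rfl⟩, rfl⟩ := h₂
  rw [← relw_append, pihN, pihN, ← List.map_append]
  exact relw_pihN_mem_relEstar A (h₁ ++ h₂)

lemma postRel_relw_pihN (A : HedgeAutNFA σ Q S) (a : σ) (h : List (UTree σ)) :
    postRel A a (relw A.step (pihN A h)) = PtN A (UTree.node a h) := by
  ext q
  constructor
  · rintro ⟨I, F, hrule, ⟨s, s'⟩, ⟨qs, hqs, hpath⟩, hI, hF⟩
    have hruns : List.Forall₂ (fun t q => HEvalN A t q) h qs :=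
      (List.forall₂_map_right_iff.mp hqs).flip
    exact .node hrule ⟨s, hI, s', hF, hpath⟩ hruns.length_eq.symm
      fun _ hp => (List.forall₂_iff_zip.mp hruns).2 hp
  · rintro @⟨_, _, _, I, F, qs, hrule, ⟨s, hI, s', hF, hpath⟩, hlen, hruns⟩
    have hruns : List.Forall₂ (fun t q => HEvalN A t q) h qs :=
      List.forall₂_iff_zip.mpr ⟨hlen.symm, fun hp => hruns _ hp⟩
    exact ⟨I, F, hrule, ⟨s, s'⟩, ⟨qs, List.forall₂_map_right_iff.mpr hruns.flip, hpath⟩, hI, hF⟩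

lemma relw_postRel_mem_relEstar (A : HedgeAutNFA σ Q S) (a : σ) {r : Set (S × S)}
    (hr : r ∈ relEstar A) : relw A.step [postRel A a r] ∈ relEstar A := by
  obtain ⟨_, ⟨h, rfl⟩, rfl⟩ := hr
  rw [postRel_relw_pihN]
  exact relw_pihN_mem_relEstar A [UTree.node a h]

lemma PrefY_isDownwardClosedIn (A : HedgeAutNFA σ Q S) {Y : Set (Set (S × S))}
    (hY : IsDownwardClosedIn (relEstar A) Y) :
    IsDownwardClosedIn (relEstar A) (PrefY A Y) :=
  fun _ ⟨_, r'', hr'', hY''⟩ _ hr' hsub =>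
    ⟨hr', r'', hr'', hY _ hY'' _ (relComp_mem_relEstar A hr' hr'') (relComp_mono hsub le_rfl)⟩

theorem YRel.isDownwardClosedIn {A : HedgeAutNFA σ Q S} {w : List (σ ⊕ σ)} {a : σ}
    {Y : Set (Set (S × S))} (hY : YRel A w a Y) : IsDownwardClosedIn (relEstar A) Y := by
  induction hY with
  | base a =>
    rintro r ⟨-, hempty⟩ r' hr' hsub
    exact ⟨hr', Set.subset_empty_iff.mp
      (hempty ▸ Set.inter_subset_inter_left _ (postRel_mono A a hsub))⟩
  | step a h' _ ih =>
    rintro r ⟨-, hpref⟩ r' hr' hsub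
    refine ⟨hr', PrefY_isDownwardClosedIn A ih _ hpref _ ?_ ?_⟩
    · exact relComp_mem_relEstar A (relw_pihN_mem_relEstar A h')
        (relw_postRel_mem_relEstar A a hr')
    · exact relComp_mono le_rfl (relw_mono A.step (.cons (postRel_mono A a hsub) .nil))

theorem Ywa_downward_closed_general {σ Q S : Type}
    (A : HedgeAutNFA σ Q S)
    (w : List (σ ⊕ σ)) (a : σ) (Y : Set (Set (S × S)))
    (hY : YRel A w a Y) :
    ∀ r ∈ Y, ∀ r' ∈ relEstar A, r' ⊆ r → r' ∈ Y :=
  hY.isDownwardClosedIn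

/-- Lemma 8: for `wa` a nonempty proper prefix of some
linearization, `Y_{wa}` is `⊆`-downward closed within `rel(E*)`. -/
theorem Ywa_downward_closed {σ Q S : Type} [Fintype σ] [Fintype Q] [Fintype S]
    (A : HedgeAutNFA σ Q S) (hfin : A.rules.Finite)
    (w : List (σ ⊕ σ)) (a : σ) (Y : Set (Set (S × S)))
    (hY : YRel A w a Y)
    (hpre : ProperPrefix (w ++ [Sum.inl a])) :
    ∀ r ∈ Y, ∀ r' ∈ relEstar A, r' ⊆ r → r' ∈ Y :=
  Ywa_downward_closed_general A w a Y hY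
end
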